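/- Let π : Ã* → G be an m-epi, let A = (Q, q₀, T, E) be a trim Ã-automaton, and let t ∈ T. Let B be the Ã-automaton obtained from A by identifying the state q₀ with t. Then (L(B))π ⊆ ⟨(L(A))π⟩, the subgroup of G generated by (L(A))π. -/

import Mathlib

/-!  Common framework: words over an involutive alphabet Ã = A ∪ A⁻¹ (modelled as
`α × Bool`), free reduction, matched epimorphisms, Stallings sections and
Ã-automata, following Silva–Soler-Escrivà–Ventura. -/

/-- A word over the involutive alphabet Ã = A ∪ A⁻¹: the letter `(a, tt)` denotes
`a` and `(a, ff)` denotes `a⁻¹` (the `FreeGroup` convention). -/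
abbrev Word (α : Type) : Type := List (α × Bool)

namespace Stallings

instance {β : Type} : HasSubset (Language β) := ⟨fun L M => ∀ w ∈ L, w ∈ M⟩
instance {β : Type} : Union (Language β) := ⟨fun L M => {w | w ∈ L ∨ w ∈ M}⟩
instance {β : Type} : Inter (Language β) := ⟨fun L M => {w | w ∈ L ∧ w ∈ M}⟩
instance {β : Type} : EmptyCollection (Language β) := ⟨(∅ : Set (List β))⟩

variable {α : Type} {G : Type} [Group G]

/-- The formal inverse of a letter of Ã. -/
def letterInv (x : α × Bool) : α × Bool := (x.1, !x.2)

/-- The formal inverse `w⁻¹` of a word over Ã. -/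
def wordInv (w : Word α) : Word α := (w.map letterInv).reverse

/-- The free reduction `w̄` of a word over Ã (iterated deletion of factors `a a⁻¹`). -/
noncomputable def redW (w : Word α) : Word α :=
  letI := Classical.decEq α
  FreeGroup.reduce w

/-- The reduction `L̄` of a language over Ã. -/
noncomputable def red (L : Language (α × Bool)) : Language (α × Bool) :=
  redW '' L

/-- The set `R_A` of reduced words over Ã. -/
noncomputable def Reduced : Language (α × Bool) := {w | redW w = w}

/-- Evaluation of a monoid homomorphism `π : Ã* → G` at a word. -/
def ev (π : FreeMonoid (α × Bool) →* G) (w : Word α) : G :=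
  π (FreeMonoid.ofList w)

/-- The image of a language under (evaluation of) `π`. -/
def evImg (π : FreeMonoid (α × Bool) →* G) (L : Language (α × Bool)) : Set G :=
  {g | ∃ w ∈ L, ev π w = g}

/-- A matched epimorphism (m-epi) `π : Ã* → G`: a surjective monoid homomorphism
sending formal inverses to inverses. -/
structure IsMEpi (π : FreeMonoid (α × Bool) →* G) : Prop where
  surjective : Function.Surjective π
  matched : ∀ (a : α) (b : Bool),
    π (FreeMonoid.of (a, !b)) = (π (FreeMonoid.of (a, b)))⁻¹

/-- `S_X = Xπ⁻¹ ∩ S`, for `X ⊆ G`. -/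
def sub (S : Language (α × Bool)) (π : FreeMonoid (α × Bool) →* G) (X : Set G) :
    Language (α × Bool) :=
  {w ∈ S | ev π w ∈ X}

/-- A Stallings section for an m-epi `π : Ã* → G`: a regular section `S ⊆ R_A`
such that each `S_g` is regular (S1), and `S_{gh} ⊆ (S_g S_h)‾` (S2). -/
structure IsStallingsSection (π : FreeMonoid (α × Bool) →* G)
    (S : Language (α × Bool)) : Prop where
  regular : S.IsRegular
  reduced : S ⊆ Reduced
  inv_mem : ∀ w ∈ S, wordInv w ∈ S
  exists_rep : ∀ g : G, ∃ w ∈ S, ev π w = g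
  s1 : ∀ g : G, (sub S π {g}).IsRegular
  s2 : ∀ g h : G, sub S π {g * h} ⊆ red (sub S π {g} * sub S π {h})

/-- A group has a Stallings section if some m-epi onto it (from the free monoid on
an involutive finite alphabet) admits a Stallings section. -/
def HasStallingsSection (G : Type) [Group G] : Prop :=
  ∃ (α : Type) (π : FreeMonoid (α × Bool) →* G) (S : Language (α × Bool)),
    Finite α ∧ IsMEpi π ∧ IsStallingsSection π S

/-- `Pref L`: the set of prefixes of words of `L`. -/
def Pref (L : Language (α × Bool)) : Language (α × Bool) :=
  {u | ∃ v, u ++ v ∈ L}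

/-- An extendable Stallings section: every `u ∈ S` admits a reduced word `v` with
`u vⁿ ∈ S` for all `n` and `u ∈ Pref (S_{(u vⁿ u⁻¹)π})` for almost all `n`. -/
def Extendable (π : FreeMonoid (α × Bool) →* G) (S : Language (α × Bool)) : Prop :=
  ∀ u ∈ S, ∃ v : Word α, v ∈ Reduced ∧
    (∀ n : ℕ, u ++ (List.replicate n v).flatten ∈ S) ∧
    ∃ N : ℕ, ∀ n ≥ N, u ∈ Pref (sub S π {ev π u * (ev π v) ^ n * (ev π u)⁻¹})

/-- An Ã-automaton with state type `Q`, initial state `start`, terminal states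
`accept` and edge set `edges`. -/
structure Automaton (β : Type) (Q : Type) where
  start : Q
  accept : Set Q
  edges : Set (Q × β × Q)

namespace Automaton

variable {β Q : Type}

/-- `M.Path p w q`: there is a path from `p` to `q` labelled `w`. -/
inductive Path (M : Automaton β Q) : Q → List β → Q → Prop
  | nil (q : Q) : Path M q [] q
  | cons {p q r : Q} {a : β} {w : List β} :
      (p, a, q) ∈ M.edges → Path M q w r → Path M p (a :: w) r

/-- The language recognized by an automaton. -/
def lang (M : Automaton β Q) : Language β :=
  {w | ∃ t ∈ M.accept, M.Path M.start w t}

/-- A trim automaton: every state lies on some successful path. -/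
def Trim (M : Automaton β Q) : Prop :=
  ∀ q : Q, ∃ (u v : List β) (t : Q), t ∈ M.accept ∧ M.Path M.start u q ∧ M.Path q v t

/-- An involutive Ã-automaton. -/
def Involutive {α : Type} (M : Automaton (α × Bool) Q) : Prop :=
  ∀ p a q, (p, a, q) ∈ M.edges → (q, letterInv a, p) ∈ M.edges

/-- A deterministic automaton. -/
def Deterministic (M : Automaton β Q) : Prop :=
  ∀ p a q q', (p, a, q) ∈ M.edges → (p, a, q') ∈ M.edges → q = q'

/-- An inverse automaton: involutive, deterministic, trim, with a single
terminal state. -/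
def IsInverse {α : Type} (M : Automaton (α × Bool) Q) : Prop :=
  M.Involutive ∧ M.Deterministic ∧ M.Trim ∧ ∃ t : Q, M.accept = {t}

/-- The automaton obtained by identifying the states `p` and `q` (the quotient is
realized on the same state type, redirecting `q` to `p`). -/
def merge [DecidableEq Q] (M : Automaton β Q) (p q : Q) : Automaton β Q :=
  let f : Q → Q := fun x => if x = q then p else x
  { start := f M.start
    accept := f '' M.accept
    edges := {e | ∃ e' ∈ M.edges, e = (f e'.1, e'.2.1, f e'.2.2)} }

end Automaton

end Stallings

/-!
Pick for every state `q` of the trim automaton a word `c q` reading from the initial state to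
`q`, and let `H` be the subgroup generated by `(L(M))π`. Completing two words that reach the same
state by a common word leading to a terminal state shows that the right coset `H (c q)π` is
compatible with the edges: an edge `p —a→ q` takes `H (c p)π` to `H (c q)π`, while the initial
and the terminal states all carry the coset `H`. Identifying two states carrying the same coset
keeps this labelling compatible, and any automaton with such a labelling has `(L)π ⊆ H`.
-/

namespace Stallings

variable {α G Q : Type} [Group G]

@[simp]
lemma ev_nil (π : FreeMonoid (α × Bool) →* G) : ev π [] = 1 :=
  map_one π

@[simp]
lemma ev_append (π : FreeMonoid (α × Bool) →* G) (u v : Word α) :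
    ev π (u ++ v) = ev π u * ev π v :=
  map_mul π (FreeMonoid.ofList u) (FreeMonoid.ofList v)

lemma ev_cons (π : FreeMonoid (α × Bool) →* G) (a : α × Bool) (w : Word α) :
    ev π (a :: w) = ev π [a] * ev π w :=
  ev_append π [a] w

namespace Automaton

lemma Path.append {β : Type} {M : Automaton β Q} {p q r : Q} {u v : List β}
    (huv : M.Path p u q) (hvr : M.Path q v r) : M.Path p (u ++ v) r := by
  induction huv with
  | nil => exact hvr
  | cons he _ ih => exact .cons he (ih hvr)

/-- `φ` labels the state `q` by the right coset `H (φ q)`. -/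
structure IsCosetLabelling (π : FreeMonoid (α × Bool) →* G) (H : Subgroup G)
    (M : Automaton (α × Bool) Q) (φ : Q → G) : Prop where
  start_mem : φ M.start ∈ H
  accept_mem : ∀ s ∈ M.accept, φ s ∈ H
  edge_mem : ∀ p a q, (p, a, q) ∈ M.edges → φ p * ev π [a] * (φ q)⁻¹ ∈ H

namespace IsCosetLabelling

variable {π : FreeMonoid (α × Bool) →* G} {H : Subgroup G} {M : Automaton (α × Bool) Q}
  {φ : Q → G}

lemma mul_ev_mul_inv_mem_of_path (hφ : IsCosetLabelling π H M φ) {p q : Q} {w : Word α}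
    (hw : M.Path p w q) : φ p * ev π w * (φ q)⁻¹ ∈ H := by
  induction hw with
  | nil r => simp
  | @cons p r r' a w he _ ih =>
    have hsplit : φ p * ev π (a :: w) * (φ r')⁻¹ =
        (φ p * ev π [a] * (φ r)⁻¹) * (φ r * ev π w * (φ r')⁻¹) := by
      rw [ev_cons]; group
    rw [hsplit]
    exact mul_mem (hφ.edge_mem p a r he) ih

lemma evImg_lang_subset (hφ : IsCosetLabelling π H M φ) : evImg π M.lang ⊆ H := by
  rintro _ ⟨w, ⟨s, hs, hw⟩, rfl⟩
  have hsplit : ev π w = (φ M.start)⁻¹ * (φ M.start * ev π w * (φ s)⁻¹) * φ s := by group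
  rw [hsplit]
  exact mul_mem (mul_mem (inv_mem hφ.start_mem) (hφ.mul_ev_mul_inv_mem_of_path hw))
    (hφ.accept_mem s hs)

lemma mul_inv_mem_redirect [DecidableEq Q] {p q : Q} (hpq : φ p * (φ q)⁻¹ ∈ H) (x : Q) :
    φ (if x = q then p else x) * (φ x)⁻¹ ∈ H := by
  split_ifs with hx
  · exact hx ▸ hpq
  · simp

lemma merge [DecidableEq Q] (hφ : IsCosetLabelling π H M φ) {p q : Q}
    (hpq : φ p * (φ q)⁻¹ ∈ H) : IsCosetLabelling π H (M.merge p q) φ where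
  start_mem := by
    simpa [Automaton.merge] using mul_mem (mul_inv_mem_redirect hpq M.start) hφ.start_mem
  accept_mem := by
    rintro _ ⟨s, hs, rfl⟩
    simpa using mul_mem (mul_inv_mem_redirect hpq s) (hφ.accept_mem s hs)
  edge_mem := by
    rintro _ a _ ⟨⟨p', a', q'⟩, he, hpaq⟩
    simp only [Prod.mk.injEq] at hpaq
    obtain ⟨rfl, rfl, rfl⟩ := hpaq
    set f : Q → Q := fun x => if x = q then p else x
    have hsplit : φ (f p') * ev π [a] * (φ (f q'))⁻¹ =
        (φ (f p') * (φ p')⁻¹) * (φ p' * ev π [a] * (φ q')⁻¹) * (φ (f q') * (φ q')⁻¹)⁻¹ := by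
      group
    rw [hsplit]
    exact mul_mem (mul_mem (mul_inv_mem_redirect hpq p') (hφ.edge_mem p' a q' he))
      (inv_mem (mul_inv_mem_redirect hpq q'))

end IsCosetLabelling

lemma Trim.exists_isCosetLabelling {π : FreeMonoid (α × Bool) →* G} {H : Subgroup G}
    {M : Automaton (α × Bool) Q} (hM : M.Trim) (hH : evImg π M.lang ⊆ H) :
    ∃ φ : Q → G, IsCosetLabelling π H M φ := by
  choose c v s hs hc hv using hM
  have ev_mem : ∀ w ∈ M.lang, ev π w ∈ H := fun w hw => hH ⟨w, hw, rfl⟩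
  have edge_mem : ∀ p a q, (p, a, q) ∈ M.edges →
      ev π (c p) * ev π [a] * (ev π (c q))⁻¹ ∈ H := by
    intro p a q he
    have hsplit : ev π (c p) * ev π [a] * (ev π (c q))⁻¹ =
        ev π (c p ++ a :: v q) * (ev π (c q ++ v q))⁻¹ := by
      simp only [ev_append, ev_cons (w := v q)]; group
    rw [hsplit]
    exact mul_mem (ev_mem _ ⟨s q, hs q, (hc p).append (.cons he (hv q))⟩)
      (inv_mem (ev_mem _ ⟨s q, hs q, (hc q).append (hv q)⟩))
  have accept_mem : ∀ r ∈ M.accept, ev π (c r) ∈ H := fun r hr => ev_mem _ ⟨r, hr, hc r⟩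
  have start_mem : ev π (c M.start) ∈ H := by
    have hsplit : ev π (c M.start) = ev π (c M.start ++ v M.start) * (ev π (v M.start))⁻¹ := by
      simp
    rw [hsplit]
    exact mul_mem (ev_mem _ ⟨_, hs _, (hc _).append (hv _)⟩) (inv_mem (ev_mem _ ⟨_, hs _, hv _⟩))
  exact ⟨fun q => ev π (c q), start_mem, accept_mem, edge_mem⟩

end Automaton

end Stallings

open Stallings in
theorem lang_mergeBasepoint_subset_closure_general {α G Q : Type} [Group G]
    [DecidableEq Q] (π : FreeMonoid (α × Bool) →* G)
    (M : Automaton (α × Bool) Q) (hM : M.Trim) (t : Q) (ht : t ∈ M.accept) :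
    evImg π (M.merge M.start t).lang ⊆ ↑(Subgroup.closure (evImg π M.lang)) := by
  obtain ⟨φ, hφ⟩ := hM.exists_isCosetLabelling (Subgroup.subset_closure (k := evImg π M.lang))
  have hstart_t : φ M.start * (φ t)⁻¹ ∈ Subgroup.closure (evImg π M.lang) :=
    mul_mem hφ.start_mem (inv_mem (hφ.accept_mem t ht))
  exact (hφ.merge hstart_t).evImg_lang_subset

open Stallings in
/-- Identifying the initial state of a trim Ã-automaton `M` with a
terminal state `t` yields an automaton `B` with `(L(B))π ⊆ ⟨(L(M))π⟩`. -/
theorem lang_mergeBasepoint_subset_closure {α G Q : Type} [Finite α] [Group G]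
    [DecidableEq Q] (π : FreeMonoid (α × Bool) →* G) (hπ : IsMEpi π)
    (M : Automaton (α × Bool) Q) (hM : M.Trim) (t : Q) (ht : t ∈ M.accept) :
    evImg π (M.merge M.start t).lang ⊆ ↑(Subgroup.closure (evImg π M.lang)) :=
  lang_mergeBasepoint_subset_closure_general π M hM t ht
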